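/- arXiv:2312.05089 — 5 statements merged into one kernel-verified Lean document; each statement's English description precedes it below -/
import Mathlib

section
/- For every complex number z, the cardinal sine function satisfies |sinc(z)| ≤ exp(|Im z|), where sinc(z) = sin(z)/z for z ≠ 0 and sinc(0) = 1. -/
/-!
Since `cos w = (exp (i w) + exp (-i w)) / 2`, we have `‖cos w‖ ≤ exp |Im w|`. By the mean value
theorem on the convex strip `|Im w| ≤ |Im z|`, `sin` is `exp |Im z|`-Lipschitz there, and comparing
`sin z` with `sin 0 = 0` gives `‖sin z‖ ≤ ‖z‖ exp |Im z|`.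
-/

open Complex

namespace Complex

theorem norm_cos_le_exp_abs_im (z : ℂ) : ‖cos z‖ ≤ Real.exp |z.im| := by
  have hexp (w : ℂ) (hw : w.re ≤ |z.im|) : ‖exp w‖ ≤ Real.exp |z.im| := by
    rw [norm_exp]; exact Real.exp_le_exp.mpr hw
  calc ‖cos z‖ = ‖exp (z * I) + exp (-z * I)‖ / 2 := by
        rw [cos, norm_div, RCLike.norm_ofNat]
    _ ≤ (‖exp (z * I)‖ + ‖exp (-z * I)‖) / 2 := by gcongr; exact norm_add_le _ _
    _ ≤ (Real.exp |z.im| + Real.exp |z.im|) / 2 := by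
        gcongr <;> apply hexp <;> simp [neg_le_abs, le_abs_self]
    _ = Real.exp |z.im| := by ring

theorem norm_sin_sub_sin_le {c : ℝ} {z w : ℂ} (hz : |z.im| ≤ c) (hw : |w.im| ≤ c) :
    ‖sin z - sin w‖ ≤ Real.exp c * ‖z - w‖ := by
  have hstrip : Convex ℝ {u : ℂ | |u.im| ≤ c} := by
    simpa only [abs_le, Set.ofPred_and, and_comm] using
      (convex_halfSpace_im_le c).inter (convex_halfSpace_im_ge (-c))
  refine hstrip.norm_image_sub_le_of_norm_deriv_le (fun u _ => differentiableAt_sin)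
    (fun u hu => ?_) hw hz
  rw [deriv_sin]
  exact (norm_cos_le_exp_abs_im u).trans (Real.exp_le_exp.mpr hu)

theorem norm_sin_le_norm_mul_exp_abs_im (z : ℂ) : ‖sin z‖ ≤ ‖z‖ * Real.exp |z.im| := by
  simpa [mul_comm] using norm_sin_sub_sin_le (le_refl |z.im|) (w := 0) (by simp)

end Complex

theorem sinc_abs_le (sinc : ℂ → ℂ) (h0 : sinc 0 = 1)
    (hs : ∀ z : ℂ, z ≠ 0 → sinc z = Complex.sin z / z) :
    ∀ z : ℂ, ‖sinc z‖ ≤ Real.exp |z.im| := by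
  intro z
  rcases eq_or_ne z 0 with rfl | hz
  · simp [h0]
  · rw [hs z hz, norm_div, div_le_iff₀ (norm_pos_iff.mpr hz), mul_comm]
    exact norm_sin_le_norm_mul_exp_abs_im z
end

section
/- For every real number a, every complex number z, every real ξ ∈ [0,1] and every positive integer N, one has |((1+a)/2)·exp((iz/N)(1−ξ/N)) + ((1−a)/2)·exp(−(iz/N)(1−ξ/N))| ≤ (1 + |a|·|z|/N)·exp(|Im z|/N). -/
/-! With `u = i z (1 - ξ/N) / N` the expression is `cosh u + a sinh u`. Both `|cosh u|` and
`|sinh u| / |u|` are at most `exp |Re u|`, and `0 ≤ 1 - ξ/N ≤ 1` gives `|u| ≤ |z|/N` and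
`|Re u| ≤ |Im z|/N`. -/

open Complex

namespace Complex

theorem norm_cosh_le_exp_abs_re (u : ℂ) : ‖cosh u‖ ≤ Real.exp |u.re| := by
  calc ‖cosh u‖ = ‖exp u + exp (-u)‖ / 2 := by rw [cosh, norm_div, Complex.norm_two]
    _ ≤ (Real.exp |u.re| + Real.exp |u.re|) / 2 := by
        gcongr
        refine (norm_add_le _ _).trans (add_le_add ?_ ?_) <;>
          rw [norm_exp, Real.exp_le_exp]
        · exact le_abs_self _
        · exact (neg_re u).trans_le (neg_le_abs _)
    _ = Real.exp |u.re| := by ring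

-- Mean value inequality for `exp` on the half-plane `re ≤ |u.re|`, which contains `±u`.
theorem norm_sinh_le_norm_mul_exp_abs_re (u : ℂ) : ‖sinh u‖ ≤ ‖u‖ * Real.exp |u.re| := by
  have hmvt : ‖exp u - exp (-u)‖ ≤ Real.exp |u.re| * ‖u - -u‖ :=
    (convex_halfSpace_re_le |u.re|).norm_image_sub_le_of_norm_deriv_le
      (fun _ _ => differentiableAt_exp)
      (fun w hw => by rw [Complex.deriv_exp, norm_exp, Real.exp_le_exp]; exact hw)
      (show (-u).re ≤ |u.re| from (neg_re u).trans_le (neg_le_abs _)) (le_abs_self u.re)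
  rw [sub_neg_eq_add, ← two_mul, norm_mul, Complex.norm_two] at hmvt
  rw [sinh, norm_div, Complex.norm_two]
  linarith

theorem cosh_add_mul_sinh (a u : ℂ) :
    cosh u + a * sinh u = (1 + a) / 2 * exp u + (1 - a) / 2 * exp (-u) := by
  rw [cosh, sinh]; ring

theorem norm_cosh_add_real_mul_sinh_le (a : ℝ) (u : ℂ) :
    ‖cosh u + a * sinh u‖ ≤ (1 + |a| * ‖u‖) * Real.exp |u.re| :=
  calc ‖cosh u + a * sinh u‖ ≤ ‖cosh u‖ + |a| * ‖sinh u‖ := by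
        simpa only [norm_mul, norm_real, Real.norm_eq_abs] using norm_add_le (cosh u) (a * sinh u)
    _ ≤ Real.exp |u.re| + |a| * (‖u‖ * Real.exp |u.re|) := by
        gcongr
        exacts [norm_cosh_le_exp_abs_re u, norm_sinh_le_norm_mul_exp_abs_re u]
    _ = (1 + |a| * ‖u‖) * Real.exp |u.re| := by ring

end Complex

theorem abs_one_sub_div_natCast_le_one {ξ : ℝ} (hξ : ξ ∈ Set.Icc (0 : ℝ) 1) (N : ℕ) :
    |1 - ξ / N| ≤ 1 := by
  obtain rfl | hN := N.eq_zero_or_pos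
  · simp
  have : ξ / N ≤ 1 := div_le_one_of_le₀ (hξ.2.trans (by exact_mod_cast hN)) N.cast_nonneg
  rw [abs_le]
  constructor <;> linarith [div_nonneg hξ.1 N.cast_nonneg]

theorem factor_abs_bound_general (a : ℝ) (z : ℂ) (ξ : ℝ) (hξ : ξ ∈ Set.Icc (0:ℝ) 1)
    (N : ℕ) :
    ‖(((1 + a : ℝ) / 2 : ℂ) * Complex.exp ((Complex.I * z / N) * (1 - (ξ : ℂ) / N))
      + ((1 - a : ℝ) / 2 : ℂ) * Complex.exp (-((Complex.I * z / N) * (1 - (ξ : ℂ) / N))))‖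
      ≤ (1 + |a| * ‖z‖ / N) * Real.exp (|z.im| / N) := by
  set t : ℝ := (1 - ξ / N) / N
  have ht : |t| ≤ 1 / N := by
    rw [abs_div, Nat.abs_cast]
    gcongr
    exact abs_one_sub_div_natCast_le_one hξ N
  have hu : I * z / N * (1 - (ξ : ℂ) / N) = t * (I * z) := by
    simp only [t]; push_cast; ring
  have hcomb (w : ℂ) : ((1 + a : ℝ) / 2 : ℂ) * exp w + ((1 - a : ℝ) / 2 : ℂ) * exp (-w)
      = cosh w + a * sinh w := by
    push_cast; exact (cosh_add_mul_sinh _ _).symm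
  rw [hcomb, hu]
  calc _ ≤ (1 + |a| * ‖t * (I * z)‖) * Real.exp |(t * (I * z)).re| :=
        norm_cosh_add_real_mul_sinh_le a _
    _ = (1 + |a| * (|t| * ‖z‖)) * Real.exp (|t| * |z.im|) := by
        rw [norm_mul, norm_mul, norm_real, norm_I, one_mul, re_ofReal_mul, I_mul_re, abs_mul,
          abs_neg, Real.norm_eq_abs]
    _ ≤ (1 + |a| * (1 / N * ‖z‖)) * Real.exp (1 / N * |z.im|) := by gcongr
    _ = (1 + |a| * ‖z‖ / N) * Real.exp (|z.im| / N) := by ring_nf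

theorem factor_abs_bound (a : ℝ) (z : ℂ) (ξ : ℝ) (hξ : ξ ∈ Set.Icc (0:ℝ) 1)
    (N : ℕ) (hN : 1 ≤ N) :
    ‖(((1 + a : ℝ) / 2 : ℂ) * Complex.exp ((Complex.I * z / N) * (1 - (ξ : ℂ) / N))
      + ((1 - a : ℝ) / 2 : ℂ) * Complex.exp (-((Complex.I * z / N) * (1 - (ξ : ℂ) / N))))‖
      ≤ (1 + |a| * ‖z‖ / N) * Real.exp (|z.im| / N) :=
  factor_abs_bound_general a z ξ hξ N
end

section
/- Let a ∈ ℝ, z ∈ ℂ, N ≥ 1, and let h_0,…,h_N be distinct points in [−1,1]. Let Γ be the circle of radius |a|+2 centered at 0. Then |exp(iaz) − Σ_{ν=0}^N (∏_{ν'≠ν} (a−h_{ν'})/(h_ν−h_{ν'}))·exp(i·h_ν·z)| ≤ ((|a|+2)/2)·exp((|a|+2)·|z|)·((|a|+1)/(|a|+1))^{N+1}, and in particular is bounded by ((|a|+2)/2)·exp((|a|+2)·|z|). -/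
open Complex Finset

/-!
With `ω(x) = ∏ ν, (x - h ν)` and `ℓ_ν` the Lagrange basis, the interpolation error of a holomorphic `f` has Hermite's contour
representation
  `f b - ∑ ν, ℓ_ν(b) f (h ν) = (2πi)⁻¹ ∮ ω(b) / (ω(ζ) (ζ - b)) f(ζ) dζ`,
obtained from Cauchy's formula once the kernel is split into the partial fractions
`(ζ - b)⁻¹ - ∑ ν, ℓ_ν(b) (ζ - h ν)⁻¹`. On the circle `|ζ| = |a| + 2` every factor
`|a - h ν| / |ζ - h ν|` is at most `1`, `|ζ - a| ≥ 2` and `|exp (i ζ z)| ≤ exp ((|a| + 2) |z|)`;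
the standard estimate of a contour integral then gives the bound.
-/

namespace Lagrange

open Polynomial

variable {F ι : Type*} [Field F] [DecidableEq ι] {s : Finset ι} {v : ι → F}

theorem eval_basis_eq_prod_div (i : ι) (x : F) :
    (Lagrange.basis s v i).eval x = ∏ j ∈ s.erase i, (x - v j) / (v i - v j) := by
  simp only [Lagrange.basis, eval_prod, basisDivisor, eval_mul, eval_C, eval_sub, eval_X,
    div_eq_inv_mul]

theorem eval_eq_sum_eval_basis_mul (hvs : Set.InjOn v s) {p : F[X]} (hp : p.degree < #s)
    (x : F) : p.eval x = ∑ i ∈ s, (Lagrange.basis s v i).eval x * p.eval (v i) := by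
  conv_lhs => rw [eq_interpolate hvs hp]
  simp only [interpolate_apply, eval_finsetSum, eval_mul, eval_C, mul_comm]

theorem inv_sub_sub_sum_eval_basis_mul_inv (hvs : Set.InjOn v s) {ζ b : F}
    (hζ : ∀ i ∈ s, ζ ≠ v i) (hζb : ζ ≠ b) :
    (ζ - b)⁻¹ - ∑ i ∈ s, (Lagrange.basis s v i).eval b * (ζ - v i)⁻¹
      = (∏ i ∈ s, (b - v i)) / ((∏ i ∈ s, (ζ - v i)) * (ζ - b)) := by
  -- `q` is the difference quotient `(ω(x) - ω(ζ)) / (x - ζ)` of `ω = nodal s v`: a polynomial of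
  -- degree `< #s`, hence reproduced by Lagrange interpolation.
  set q := nodal s v /ₘ (X - C ζ)
  have hω : ∀ x, (nodal s v).eval x = (nodal s v).eval ζ + (x - ζ) * q.eval x := fun x => by
    conv_lhs => rw [← modByMonic_add_div (nodal s v) (X - C ζ)]
    simp [q, modByMonic_X_sub_C_eq_C_eval]
  have hq : q.degree < #s := by
    rw [← degree_nodal (v := v)]
    exact degree_divByMonic_lt _ _ nodal_ne_zero (by simp)
  have hωζ : (nodal s v).eval ζ ≠ 0 := eval_nodal_not_at_node hζ
  have hq_node : ∀ i ∈ s, q.eval (v i) = (nodal s v).eval ζ * (ζ - v i)⁻¹ := fun i hi => by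
    have := hω (v i)
    rw [eval_nodal_at_node hi] at this
    rw [eq_mul_inv_iff_mul_eq₀ (sub_ne_zero.mpr (hζ i hi))]
    linear_combination this
  have hsum : ∑ i ∈ s, (Lagrange.basis s v i).eval b * (ζ - v i)⁻¹
      = q.eval b / (nodal s v).eval ζ := by
    rw [eval_eq_sum_eval_basis_mul hvs hq, sum_div]
    refine sum_congr rfl fun i hi => ?_
    rw [hq_node i hi]
    field_simp
  rw [hsum, ← eval_nodal, ← eval_nodal]
  have := hω b
  field_simp [sub_ne_zero.mpr hζb]
  linear_combination -this

end Lagrange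

theorem norm_prod_sub_div_prod_sub_mul_sub_le {ι K : Type*} [NormedField K] {s : Finset ι}
    {v : ι → K} {ζ b : K} (hv : ∀ i ∈ s, ‖b - v i‖ ≤ ‖ζ - v i‖) :
    ‖(∏ i ∈ s, (b - v i)) / ((∏ i ∈ s, (ζ - v i)) * (ζ - b))‖ ≤ ‖ζ - b‖⁻¹ := by
  rw [norm_div, norm_mul, norm_prod, norm_prod, div_mul_eq_div_div]
  calc (∏ i ∈ s, ‖b - v i‖) / (∏ i ∈ s, ‖ζ - v i‖) / ‖ζ - b‖
      ≤ (∏ i ∈ s, ‖ζ - v i‖) / (∏ i ∈ s, ‖ζ - v i‖) / ‖ζ - b‖ := by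
        gcongr with i hi
        exact hv i hi
    _ ≤ 1 / ‖ζ - b‖ := by gcongr; exact div_self_le_one _
    _ = ‖ζ - b‖⁻¹ := one_div _

theorem norm_prod_sub_div_prod_sub_mul_sub_le_half {ι K : Type*} [NormedField K] {s : Finset ι}
    {v : ι → K} {ζ b : K} (hv : ∀ i ∈ s, ‖v i‖ ≤ 1) (hζ : ‖ζ‖ = ‖b‖ + 2) :
    ‖(∏ i ∈ s, (b - v i)) / ((∏ i ∈ s, (ζ - v i)) * (ζ - b))‖ ≤ 1 / 2 := by
  have hζb : 2 ≤ ‖ζ - b‖ := by linarith [norm_sub_norm_le ζ b]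
  refine (norm_prod_sub_div_prod_sub_mul_sub_le fun i hi => ?_).trans ?_
  · calc ‖b - v i‖ ≤ ‖b‖ + ‖v i‖ := norm_sub_le _ _
      _ ≤ ‖ζ‖ - ‖v i‖ := by linarith [hv i hi]
      _ ≤ ‖ζ - v i‖ := norm_sub_norm_le _ _
  · rw [one_div]
    exact inv_anti₀ two_pos hζb

namespace DiffContOnCl

open Metric Real

variable {ι E : Type*} [DecidableEq ι] [NormedAddCommGroup E] [NormedSpace ℂ E] [CompleteSpace E]
  {f : ℂ → E} {c b : ℂ} {R : ℝ} {s : Finset ι} {v : ι → ℂ}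

theorem sub_sum_eval_basis_smul_eq_circleIntegral (hf : DiffContOnCl ℂ f (ball c R))
    (hvs : Set.InjOn v s) (hv : ∀ i ∈ s, v i ∈ ball c R) (hb : b ∈ ball c R) :
    f b - ∑ i ∈ s, (Lagrange.basis s v i).eval b • f (v i)
      = (2 * π * I : ℂ)⁻¹ • ∮ ζ in C(c, R),
          ((∏ i ∈ s, (b - v i)) / ((∏ i ∈ s, (ζ - v i)) * (ζ - b))) • f ζ := by
  have hR : 0 < R := pos_of_mem_ball hb
  have hout : ∀ w ∈ ball c R, w ∉ sphere c R := fun w hw hw' =>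
    (mem_ball.mp hw).ne (mem_sphere.mp hw')
  have hcont : ∀ w ∈ ball c R, ContinuousOn (fun ζ => (ζ - w)⁻¹ • f ζ) (sphere c R) := by
    intro w hw
    refine ContinuousOn.smul (ContinuousOn.inv₀ (by fun_prop) fun ζ hζ h => hout w hw ?_)
      ((closure_ball c hR.ne' ▸ hf.continuousOn).mono sphere_subset_closedBall)
    rwa [← sub_eq_zero.mp h]
  have hint : ∀ i ∈ s, CircleIntegrable
      (fun ζ => (Lagrange.basis s v i).eval b • ((ζ - v i)⁻¹ • f ζ)) c R := fun i hi =>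
    ((hcont _ (hv i hi)).const_smul _).circleIntegrable hR.le
  have hkernel : Set.EqOn
      (fun ζ => ((∏ i ∈ s, (b - v i)) / ((∏ i ∈ s, (ζ - v i)) * (ζ - b))) • f ζ)
      (fun ζ => (ζ - b)⁻¹ • f ζ
        - ∑ i ∈ s, (Lagrange.basis s v i).eval b • ((ζ - v i)⁻¹ • f ζ))
      (sphere c R) := fun ζ hζ => by
    have hζv : ∀ i ∈ s, ζ ≠ v i := fun i hi h => hout _ (hv i hi) (h ▸ hζ)
    have hζb : ζ ≠ b := fun h => hout _ hb (h ▸ hζ)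
    simp only [← Lagrange.inv_sub_sub_sum_eval_basis_mul_inv hvs hζv hζb, sub_smul, sum_smul,
      smul_smul]
  rw [circleIntegral.integral_congr hR.le hkernel,
    circleIntegral.integral_sub ((hcont b hb).circleIntegrable hR.le)
      (CircleIntegrable.fun_sum s hint), circleIntegral.integral_fun_sum hint]
  simp only [circleIntegral.integral_smul, smul_sub, smul_sum,
    smul_comm (2 * π * I : ℂ)⁻¹ (_ : ℂ), hf.two_pi_i_inv_smul_circleIntegral_sub_inv_smul hb]
  congr 1
  exact sum_congr rfl fun i hi => by
    rw [hf.two_pi_i_inv_smul_circleIntegral_sub_inv_smul (hv i hi)]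

theorem norm_sub_sum_eval_basis_smul_le (hf : DiffContOnCl ℂ f (ball c R))
    (hvs : Set.InjOn v s) (hv : ∀ i ∈ s, v i ∈ ball c R) (hb : b ∈ ball c R) {C : ℝ}
    (hC : ∀ ζ ∈ sphere c R,
      ‖(∏ i ∈ s, (b - v i)) / ((∏ i ∈ s, (ζ - v i)) * (ζ - b))‖ * ‖f ζ‖ ≤ C) :
    ‖f b - ∑ i ∈ s, (Lagrange.basis s v i).eval b • f (v i)‖ ≤ R * C := by
  rw [hf.sub_sum_eval_basis_smul_eq_circleIntegral hvs hv hb]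
  exact circleIntegral.norm_two_pi_i_inv_smul_integral_le_of_norm_le_const (pos_of_mem_ball hb).le
    fun ζ hζ => (norm_smul _ _).trans_le (hC ζ hζ)

end DiffContOnCl

theorem hermite_remainder_bound_general (a : ℝ) (z : ℂ) (N : ℕ) (h : ℕ → ℝ)
    (hmem : ∀ ν ∈ Finset.range (N + 1), h ν ∈ Set.Icc (-1 : ℝ) 1)
    (hdist : ∀ ν ∈ Finset.range (N + 1), ∀ ν' ∈ Finset.range (N + 1),
      ν ≠ ν' → h ν ≠ h ν') :
    ‖(Complex.exp (Complex.I * a * z)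
      - ∑ ν ∈ Finset.range (N + 1),
          ((∏ ν' ∈ (Finset.range (N + 1)).erase ν, ((a - h ν') / (h ν - h ν') : ℂ))
            * Complex.exp (Complex.I * (h ν) * z)))‖
      ≤ ((|a| + 2) / 2) * Real.exp ((|a| + 2) * ‖z‖)
          * ((|a| + 1) / (|a| + 1)) ^ (N + 1) ∧
    ‖(Complex.exp (Complex.I * a * z)
      - ∑ ν ∈ Finset.range (N + 1),
          ((∏ ν' ∈ (Finset.range (N + 1)).erase ν, ((a - h ν') / (h ν - h ν') : ℂ))
            * Complex.exp (Complex.I * (h ν) * z)))‖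
      ≤ ((|a| + 2) / 2) * Real.exp ((|a| + 2) * ‖z‖) := by
  have hnode : ∀ ν ∈ range (N + 1), ‖(h ν : ℂ)‖ ≤ 1 := fun ν hν => by
    simpa [abs_le] using hmem ν hν
  have hinj : Set.InjOn (fun ν => (h ν : ℂ)) (range (N + 1)) := fun ν hν ν' hν' hνν' =>
    by_contra fun hne => hdist ν hν ν' hν' hne (ofReal_injective hνν')
  have hkernel : ∀ ζ ∈ Metric.sphere (0 : ℂ) (|a| + 2),
      ‖(∏ ν ∈ range (N + 1), ((a : ℂ) - h ν)) / ((∏ ν ∈ range (N + 1), (ζ - h ν)) * (ζ - a))‖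
        * ‖exp (I * ζ * z)‖ ≤ 1 / 2 * Real.exp ((|a| + 2) * ‖z‖) := fun ζ hζ => by
    rw [mem_sphere_zero_iff_norm] at hζ
    gcongr
    · exact norm_prod_sub_div_prod_sub_mul_sub_le_half hnode
        (by rw [hζ, norm_real, Real.norm_eq_abs])
    · calc ‖exp (I * ζ * z)‖ ≤ Real.exp ‖I * ζ * z‖ := norm_exp_le_exp_norm _
        _ = Real.exp ((|a| + 2) * ‖z‖) := by rw [norm_mul, norm_mul, norm_I, one_mul, hζ]
  have hexp : Differentiable ℂ fun ζ => exp (I * ζ * z) := by fun_prop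
  have hbound := hexp.diffContOnCl.norm_sub_sum_eval_basis_smul_le hinj
    (fun ν hν => mem_ball_zero_iff.mpr ((hnode ν hν).trans_lt (by linarith [abs_nonneg a])))
    (mem_ball_zero_iff.mpr (by simp)) hkernel
  simp only [Lagrange.eval_basis_eq_prod_div, smul_eq_mul] at hbound
  rw [div_self (by positivity), one_pow, mul_one, and_self]
  linarith

theorem hermite_remainder_bound (a : ℝ) (z : ℂ) (N : ℕ) (hN : 1 ≤ N) (h : ℕ → ℝ)
    (hmem : ∀ ν ∈ Finset.range (N + 1), h ν ∈ Set.Icc (-1 : ℝ) 1)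
    (hdist : ∀ ν ∈ Finset.range (N + 1), ∀ ν' ∈ Finset.range (N + 1),
      ν ≠ ν' → h ν ≠ h ν') :
    ‖(Complex.exp (Complex.I * a * z)
      - ∑ ν ∈ Finset.range (N + 1),
          ((∏ ν' ∈ (Finset.range (N + 1)).erase ν, ((a - h ν') / (h ν - h ν') : ℂ))
            * Complex.exp (Complex.I * (h ν) * z)))‖
      ≤ ((|a| + 2) / 2) * Real.exp ((|a| + 2) * ‖z‖)
          * ((|a| + 1) / (|a| + 1)) ^ (N + 1) ∧
    ‖(Complex.exp (Complex.I * a * z)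
      - ∑ ν ∈ Finset.range (N + 1),
          ((∏ ν' ∈ (Finset.range (N + 1)).erase ν, ((a - h ν') / (h ν - h ν') : ℂ))
            * Complex.exp (Complex.I * (h ν) * z)))‖
      ≤ ((|a| + 2) / 2) * Real.exp ((|a| + 2) * ‖z‖) :=
  hermite_remainder_bound_general a z N h hmem hdist
end

section
/- Let ε = (ε_N) be a sequence in [0,1) with ε_N → 0. Then for every λ ∈ ℝ and x ∈ ℝ, exp(iε_N x)·(cos(x(1−ε_N)/N) + iλ·sin(x(1−ε_N)/N))^N → exp(iλx) as N → ∞, uniformly on compact subsets of ℝ² in (λ,x). -/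
/-!
Put `w = x(1-ε)/N` and `z = cos w + iλ sin w`. Since `z - 1 - iλw = O((1+|λ|) w²)`, the
estimate `log(1+u) = u + O(|u|²)` gives `log z = iλw + O((1+|λ|)² w²)`. As `Nw = x(1-ε)`,
`exp(iεx) z^N = exp(iλx) · exp(E)` with `E = iεx(1-λ) + N(log z - iλw)`, and on `|λ|, |x| ≤ R`
we get `|E| ≤ ε R(1+R) + 2 (R(1+R))² / N`, a bound that tends to `0` independently of `(λ, x)`.
-/

open Complex Filter

theorem Real.abs_sin_sub_self_le_sq {w : ℝ} (hw : |w| ≤ 1) : |Real.sin w - w| ≤ w ^ 2 := by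
  have h := Real.sin_bound hw
  have h3 : |w| ^ 3 ≤ |w| ^ 2 := pow_le_pow_of_le_one (abs_nonneg w) hw (by norm_num)
  have h5 : |w| ^ 5 ≤ |w| ^ 2 := pow_le_pow_of_le_one (abs_nonneg w) hw (by norm_num)
  calc |Real.sin w - w| = |(Real.sin w - (w - w ^ 3 / 6)) - w ^ 3 / 6| := by ring_nf
    _ ≤ |Real.sin w - (w - w ^ 3 / 6)| + |w ^ 3 / 6| := abs_sub _ _
    _ ≤ |w| ^ 5 / 100 + |w| ^ 3 / 6 := by
        rw [abs_div, abs_pow, abs_of_pos (by norm_num : (0:ℝ) < 6)]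
        gcongr
    _ ≤ w ^ 2 := by rw [← sq_abs w]; linarith [sq_nonneg |w|]

theorem Real.abs_cos_sub_one_le (w : ℝ) : |Real.cos w - 1| ≤ w ^ 2 / 2 :=
  abs_le.2 ⟨by linarith [Real.one_sub_sq_div_two_le_cos (x := w)],
    by linarith [Real.cos_le_one w, sq_nonneg w]⟩

theorem Complex.norm_log_one_add_sub_self_le_sq {u : ℂ} (hu : ‖u‖ ≤ 1 / 2) :
    ‖log (1 + u) - u‖ ≤ ‖u‖ ^ 2 := by
  have hinv : (1 - ‖u‖)⁻¹ ≤ 2 := by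
    rw [inv_le_comm₀ (by linarith) two_pos]; linarith
  calc ‖log (1 + u) - u‖ ≤ ‖u‖ ^ 2 * (1 - ‖u‖)⁻¹ / 2 :=
        norm_log_one_add_sub_self_le (by linarith)
    _ ≤ ‖u‖ ^ 2 * 2 / 2 := by gcongr
    _ = ‖u‖ ^ 2 := by ring

theorem tendstoUniformlyOn_of_dist_le {ι β α : Type*} [PseudoMetricSpace α] {F : ι → β → α}
    {f : β → α} {p : Filter ι} {s : Set β} {g : ι → ℝ} (hg : Tendsto g p (nhds 0))
    (hFg : ∀ᶠ i in p, ∀ x ∈ s, dist (f x) (F i x) ≤ g i) : TendstoUniformlyOn F f p s := by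
  rw [Metric.tendstoUniformlyOn_iff]
  intro δ hδ
  filter_upwards [hFg, hg.eventually_lt_const hδ] with i hi hgi x hx using (hi x hx).trans_lt hgi

-- `l` plays the role of the paper's `λ`.
noncomputable def cosAddIMulSin (l w : ℝ) : ℂ := cos w + I * l * sin w

namespace cosAddIMulSin

variable {l w : ℝ}

@[simp] theorem re : (cosAddIMulSin l w).re = Real.cos w := by
  simp [cosAddIMulSin, ← ofReal_cos, ← ofReal_sin]

@[simp] theorem im : (cosAddIMulSin l w).im = l * Real.sin w := by
  simp [cosAddIMulSin, ← ofReal_cos, ← ofReal_sin]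

theorem norm_sub_one_le (hw : |w| ≤ 1) : ‖cosAddIMulSin l w - 1‖ ≤ (1 / 2 + |l|) * |w| := by
  calc ‖cosAddIMulSin l w - 1‖ ≤ |Real.cos w - 1| + |l * Real.sin w| := by
        simpa using norm_le_abs_re_add_abs_im (cosAddIMulSin l w - 1)
    _ ≤ w ^ 2 / 2 + |l| * |w| := by
        rw [abs_mul]; gcongr ?_ + _ * ?_
        exacts [Real.abs_cos_sub_one_le w, Real.abs_sin_le_abs]
    _ ≤ (1 / 2 + |l|) * |w| := by
        rw [← sq_abs w]; nlinarith [abs_nonneg w]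

theorem norm_sub_one_sub_le (hw : |w| ≤ 1) :
    ‖cosAddIMulSin l w - 1 - I * l * w‖ ≤ (1 / 2 + |l|) * w ^ 2 := by
  calc ‖cosAddIMulSin l w - 1 - I * l * w‖ ≤ |Real.cos w - 1| + |l * (Real.sin w - w)| := by
        simpa [mul_sub] using norm_le_abs_re_add_abs_im (cosAddIMulSin l w - 1 - I * l * w)
    _ ≤ w ^ 2 / 2 + |l| * w ^ 2 := by
        rw [abs_mul]; gcongr ?_ + _ * ?_
        exacts [Real.abs_cos_sub_one_le w, Real.abs_sin_sub_self_le_sq hw]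
    _ = (1 / 2 + |l|) * w ^ 2 := by ring

theorem norm_log_sub_le (hlw : (1 + |l|) * |w| ≤ 1 / 2) :
    ‖log (cosAddIMulSin l w) - I * l * w‖ ≤ 2 * (1 + |l|) ^ 2 * w ^ 2 := by
  have hw : |w| ≤ 1 := by nlinarith [abs_nonneg l, abs_nonneg w]
  set u := cosAddIMulSin l w - 1
  have hu : ‖u‖ ≤ (1 / 2 + |l|) * |w| := norm_sub_one_le hw
  have hlog : ‖log (1 + u) - u‖ ≤ ‖u‖ ^ 2 :=
    norm_log_one_add_sub_self_le_sq (hu.trans (by nlinarith [abs_nonneg w]))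
  calc ‖log (cosAddIMulSin l w) - I * l * w‖ = ‖(log (1 + u) - u) + (u - I * l * w)‖ := by
        simp only [u, add_sub_cancel, sub_add_sub_cancel]
    _ ≤ ‖u‖ ^ 2 + (1 / 2 + |l|) * w ^ 2 := norm_add_le_of_le hlog (norm_sub_one_sub_le hw)
    _ ≤ ((1 / 2 + |l|) * |w|) ^ 2 + (1 / 2 + |l|) * w ^ 2 := by gcongr
    _ ≤ 2 * (1 + |l|) ^ 2 * w ^ 2 := by
        rw [mul_pow, sq_abs]; nlinarith [abs_nonneg l, sq_nonneg w]

theorem ne_zero (hlw : (1 + |l|) * |w| ≤ 1 / 2) : cosAddIMulSin l w ≠ 0 := by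
  intro h0
  have := norm_sub_one_le (l := l) (w := w) (by nlinarith [abs_nonneg l, abs_nonneg w])
  rw [h0, zero_sub, norm_neg, norm_one] at this
  nlinarith [abs_nonneg w]

theorem exp_mul_pow_eq {e x : ℝ} {N : ℕ} (hN : N ≠ 0)
    (hz : cosAddIMulSin l (x * (1 - e) / N) ≠ 0) :
    exp (I * e * x) * cosAddIMulSin l (x * (1 - e) / N) ^ N =
      exp (I * l * x) * exp (I * e * x * (1 - l) +
        N * (log (cosAddIMulSin l (x * (1 - e) / N)) - I * l * ↑(x * (1 - e) / N))) := by
  conv_lhs => rw [← exp_log hz, ← exp_nat_mul, ← exp_add]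
  rw [← exp_add]
  congr 1
  push_cast
  field_simp
  ring

theorem dist_exp_exp_mul_pow_le {R e x : ℝ} {N : ℕ} (hN : 0 < N) (he : e ∈ Set.Ico 0 1)
    (hl : |l| ≤ R) (hx : |x| ≤ R) (hRN : R * (1 + R) / N ≤ 1 / 2)
    (hsmall : e * (R * (1 + R)) + 2 * (R * (1 + R)) ^ 2 / N ≤ 1) :
    dist (exp (I * l * x)) (exp (I * e * x) * cosAddIMulSin l (x * (1 - e) / N) ^ N) ≤
      2 * (e * (R * (1 + R)) + 2 * (R * (1 + R)) ^ 2 / N) := by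
  set w := x * (1 - e) / N
  have hNpos : (0 : ℝ) < N := Nat.cast_pos.2 hN
  have hR : 0 ≤ R := (abs_nonneg l).trans hl
  have hw : |w| ≤ R / N := by
    rw [abs_div, abs_mul, abs_of_pos hNpos, abs_of_pos (sub_pos.2 he.2)]
    gcongr
    nlinarith [abs_nonneg x, he.1]
  have hlw : (1 + |l|) * |w| ≤ 1 / 2 :=
    calc (1 + |l|) * |w| ≤ (1 + R) * (R / N) := by gcongr
      _ = R * (1 + R) / N := by ring
      _ ≤ 1 / 2 := hRN
  have hz : cosAddIMulSin l w ≠ 0 := ne_zero hlw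
  have hdrift : ‖I * e * x * (1 - l)‖ ≤ e * (R * (1 + R)) := by
    rw [show I * e * x * (1 - l) = I * ↑(e * (x * (1 - l))) by push_cast; ring, norm_mul, norm_I,
      one_mul, norm_real, Real.norm_eq_abs, abs_mul, abs_mul, abs_of_nonneg he.1]
    have : |1 - l| ≤ 1 + R := (abs_sub _ _).trans (by rw [abs_one]; linarith)
    gcongr; exact he.1
  have hlog : ‖(N : ℂ) * (log (cosAddIMulSin l w) - I * l * w)‖ ≤ 2 * (R * (1 + R)) ^ 2 / N := by
    rw [norm_mul, Complex.norm_natCast]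
    calc N * ‖log (cosAddIMulSin l w) - I * l * w‖ ≤ N * (2 * (1 + R) ^ 2 * (R / N) ^ 2) := by
          gcongr
          refine (norm_log_sub_le hlw).trans ?_
          rw [← sq_abs w]
          gcongr
      _ = 2 * (R * (1 + R)) ^ 2 / N := by field_simp
  have hE := norm_add_le_of_le hdrift hlog
  rw [exp_mul_pow_eq hN.ne' hz, dist_eq_norm, ← mul_one_sub, norm_mul, mul_assoc, ← ofReal_mul,
    norm_exp_I_mul_ofReal, one_mul, norm_sub_rev]
  exact (norm_exp_sub_one_le (hE.trans hsmall)).trans (by gcongr)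

end cosAddIMulSin

theorem superoscillation_tendsto (ε : ℕ → ℝ) (hε : ∀ N, ε N ∈ Set.Ico (0:ℝ) 1)
    (hlim : Tendsto ε atTop (nhds 0)) :
    ∀ K : Set (ℝ × ℝ), IsCompact K →
      TendstoUniformlyOn
        (fun N (p : ℝ × ℝ) =>
          Complex.exp (Complex.I * (ε N : ℂ) * p.2)
            * (Complex.cos ((p.2 * (1 - ε N) / N : ℝ) : ℂ)
                + Complex.I * (p.1 : ℂ) * Complex.sin ((p.2 * (1 - ε N) / N : ℝ) : ℂ)) ^ N)
        (fun p => Complex.exp (Complex.I * (p.1 : ℂ) * p.2)) atTop K := by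
  intro K hK
  obtain ⟨R, -, hR⟩ := hK.isBounded.exists_pos_norm_le
  have hRK : ∀ p ∈ K, |p.1| ≤ R ∧ |p.2| ≤ R := fun p hp =>
    ⟨(norm_fst_le p).trans (hR p hp), (norm_snd_le p).trans (hR p hp)⟩
  set c := R * (1 + R)
  have hbound : Tendsto (fun N : ℕ => ε N * c + 2 * c ^ 2 / N) atTop (nhds 0) := by
    simpa using (hlim.mul_const c).add (tendsto_const_div_atTop_nhds_zero_nat (2 * c ^ 2))
  refine tendstoUniformlyOn_of_dist_le (by simpa using hbound.const_mul 2) ?_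
  filter_upwards [(tendsto_const_div_atTop_nhds_zero_nat c).eventually_le_const one_half_pos,
    hbound.eventually_le_const one_pos, eventually_gt_atTop 0] with N hcN hsmall hN p hp
  exact cosAddIMulSin.dist_exp_exp_mul_pow_le hN (hε N) (hRK p hp).1 (hRK p hp).2 hcN hsmall
end

section
/- Let T(X) = Σ_{κ=0}^N a_κ X^κ be a polynomial of degree at most N with complex coefficients, R > 0, and let γ_ν = ∫_0^1 T(Rξ)·ℓ_ν(ξ) dξ for 0 ≤ ν ≤ N, where ℓ_ν are the shifted Legendre polynomials. Then for every 0 ≤ κ ≤ N: a_κ·R^κ = (−1)^κ·C(2κ,κ)·Σ_{ν=κ}^N √(2ν+1)·C(ν+κ, ν−κ)·γ_ν. -/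
/-!
The normalized shifted Legendre polynomials `ℓ_ν = √(2ν+1) P_ν` are orthonormal on `[0, 1]`.
This comes from the moments `∫₀¹ x^m P_n = (-1)^n m(m-1)⋯(m-n+1) / ((m+1)(m+2)⋯(m+n+1))`,
which satisfy a two-term recurrence in `n` and vanish for `m < n`.
Let `L` be the coefficient matrix of `ℓ_0, …, ℓ_N` and `M_{νk} = ∫₀¹ x^k ℓ_ν`.
Orthonormality says `M Lᵀ = 1`, hence also `Lᵀ M = 1`.
Since `γ = M (a_k R^k)_k`, this gives `a_κ R^κ = ∑_ν L_{νκ} γ_ν`, and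
`L_{νκ} = √(2ν+1) (-1)^κ C(2κ,κ) C(ν+κ,ν-κ)`.
-/

open Finset Polynomial intervalIntegral

namespace Polynomial

theorem aeval_one_shiftedLegendre {R : Type*} [CommRing R] (n : ℕ) :
    aeval (1 : R) (shiftedLegendre n) = (-1) ^ n := by
  rw [shiftedLegendre_eval_symm, sub_self, ← coeff_zero_eq_aeval_zero', coeff_shiftedLegendre]
  simp

theorem aeval_shiftedLegendre {R : Type*} [CommRing R] {n N : ℕ} (hn : n ≤ N) (x : R) :
    aeval x (shiftedLegendre n) =
      ∑ k ∈ range (N + 1), ((shiftedLegendre n).coeff k : R) * x ^ k := by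
  rw [aeval_eq_sum_range' (n := N + 1) (by rw [natDegree_shiftedLegendre]; omega)]
  simp [zsmul_eq_mul]

theorem sum_range_coeff_shiftedLegendre {R : Type*} [CommRing R] (n : ℕ) :
    ∑ k ∈ range (n + 1), ((shiftedLegendre n).coeff k : R) = (-1) ^ n := by
  simpa using (aeval_shiftedLegendre le_rfl (1 : R)).symm.trans (aeval_one_shiftedLegendre n)

theorem coeff_shiftedLegendre_succ (n k : ℕ) :
    ((n : ℤ) + 1 - k) * (shiftedLegendre (n + 1)).coeff k =
      (n + k + 1) * (shiftedLegendre n).coeff k := by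
  simp only [coeff_shiftedLegendre]
  rcases le_or_gt k (n + 1) with hk | hk
  · have h₁ : ((n.choose k * (n + 1) : ℕ) : ℤ) = ((n + 1).choose k * (n + 1 - k) : ℕ) :=
      congrArg _ (Nat.choose_mul_succ_eq n k)
    have h₂ : (((n + k + 1) * (n + k).choose n : ℕ) : ℤ) =
        ((n + k + 1).choose (n + 1) * (n + 1) : ℕ) :=
      congrArg _ (Nat.add_one_mul_choose_eq (n + k) n)
    push_cast [Nat.cast_sub hk] at h₁ h₂
    rw [show n + 1 + k = n + k + 1 by ring]
    linear_combination -(-1) ^ k * ((n + k + 1).choose (n + 1) : ℤ) * h₁ -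
      (-1) ^ k * (n.choose k : ℤ) * h₂
  · simp [Nat.choose_eq_zero_of_lt hk, Nat.choose_eq_zero_of_lt (by omega : n < k)]

theorem coeff_shiftedLegendre_of_le {n k : ℕ} (hkn : k ≤ n) :
    (shiftedLegendre n).coeff k = (-1) ^ k * (2 * k).choose k * (n + k).choose (n - k) := by
  have h := Nat.choose_mul (n := n + k) (k := 2 * k) (s := k) (by omega)
  rw [show n + k - k = n by omega, show 2 * k - k = k by omega,
    Nat.choose_symm_of_eq_add (show n + k = 2 * k + (n - k) by omega)] at h
  rw [coeff_shiftedLegendre, Nat.choose_symm_add, mul_assoc, mul_assoc, ← Nat.cast_mul,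
    ← Nat.cast_mul, mul_comm (n.choose k), ← h, mul_comm ((n + k).choose (n - k))]

section Moments

variable {K : Type*} [Field K] [CharZero K]

theorem sum_coeff_shiftedLegendre_succ_div (m n : ℕ) :
    ((m : K) + n + 2) *
        ∑ k ∈ range (n + 2), ((shiftedLegendre (n + 1)).coeff k : K) / (m + k + 1) =
      -((m : K) - n) * ∑ k ∈ range (n + 1), ((shiftedLegendre n).coeff k : K) / (m + k + 1) := by
  have hext : ∑ k ∈ range (n + 1), ((shiftedLegendre n).coeff k : K) / (m + k + 1) =
      ∑ k ∈ range (n + 2), ((shiftedLegendre n).coeff k : K) / (m + k + 1) := by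
    rw [sum_range_succ _ (n + 1), coeff_eq_zero_of_natDegree_lt (by simp)]
    simp
  have hsum : ∑ k ∈ range (n + 2),
      (((shiftedLegendre (n + 1)).coeff k : K) + (shiftedLegendre n).coeff k) = 0 := by
    rw [sum_add_distrib, sum_range_coeff_shiftedLegendre, sum_range_succ _ (n + 1),
      sum_range_coeff_shiftedLegendre, coeff_eq_zero_of_natDegree_lt (by simp)]
    ring
  rw [hext, neg_mul, eq_neg_iff_add_eq_zero, mul_sum, mul_sum, ← sum_add_distrib, ← hsum]
  -- with `c, c'` the `k`-th coefficients of `P_n, P_{n+1}`: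
  -- `(m+n+2) c' + (m-n) c = (m+k+1) (c + c')`
  refine sum_congr rfl fun k _ => ?_
  have hk : (m : K) + k + 1 ≠ 0 := by exact_mod_cast (m + k).succ_ne_zero
  have hrec := congrArg (Int.cast : ℤ → K) (coeff_shiftedLegendre_succ n k)
  push_cast at hrec
  field_simp
  linear_combination hrec

theorem sum_coeff_shiftedLegendre_div (m n : ℕ) :
    ∑ k ∈ range (n + 1), ((shiftedLegendre n).coeff k : K) / (m + k + 1) =
      (-1) ^ n * (descPochhammer K n).eval (m : K) /
        (ascPochhammer K (n + 1)).eval ((m : K) + 1) := by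
  induction n with
  | zero => simp [coeff_shiftedLegendre]
  | succ n ih =>
    have hasc : (ascPochhammer K (n + 1)).eval ((m : K) + 1) ≠ 0 := by
      rw [← Nat.cast_succ, ← Nat.cast_ascFactorial]
      exact_mod_cast (Nat.ascFactorial_pos m (n + 1)).ne'
    have hm : (m : K) + n + 2 ≠ 0 := by exact_mod_cast (m + n + 1).succ_ne_zero
    rw [← mul_right_inj' hm, sum_coeff_shiftedLegendre_succ_div, ih, descPochhammer_succ_eval,
      ascPochhammer_succ_eval (n + 1),
      show (m : K) + 1 + (n + 1 : ℕ) = m + n + 2 by push_cast; ring]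
    field_simp
    ring

end Moments

theorem integral_pow_mul_aeval_shiftedLegendre (m n : ℕ) :
    ∫ x in (0 : ℝ)..1, x ^ m * aeval x (shiftedLegendre n) =
      (-1) ^ n * (descPochhammer ℝ n).eval (m : ℝ) /
        (ascPochhammer ℝ (n + 1)).eval ((m : ℝ) + 1) := by
  rw [← sum_coeff_shiftedLegendre_div]
  simp_rw [aeval_shiftedLegendre le_rfl, mul_sum]
  rw [integral_finsetSum fun k _ => (by fun_prop : Continuous _).intervalIntegrable _ _]
  refine sum_congr rfl fun k _ => ?_
  simp_rw [mul_left_comm (_ ^ m), ← pow_add]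
  rw [integral_const_mul, integral_pow]
  push_cast
  ring

theorem integral_aeval_shiftedLegendre_mul_of_le {m n : ℕ} (hmn : m ≤ n) :
    ∫ x in (0 : ℝ)..1, aeval x (shiftedLegendre m) * aeval x (shiftedLegendre n) =
      if m = n then 1 / (2 * (n : ℝ) + 1) else 0 := by
  simp_rw [aeval_shiftedLegendre (le_refl m), sum_mul]
  rw [integral_finsetSum fun k _ => (by fun_prop : Continuous _).intervalIntegrable _ _]
  simp_rw [mul_assoc, integral_const_mul, integral_pow_mul_aeval_shiftedLegendre]
  have hlow : ∀ k < n, ((shiftedLegendre m).coeff k : ℝ) * ((-1) ^ n *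
      (descPochhammer ℝ n).eval (k : ℝ) / (ascPochhammer ℝ (n + 1)).eval ((k : ℝ) + 1)) = 0 :=
    fun k hk => by rw [descPochhammer_eval_coe_nat_of_lt hk]; simp
  split_ifs with h
  · subst h
    rw [sum_range_succ, sum_eq_zero fun k hk => hlow k (mem_range.mp hk), zero_add,
      descPochhammer_eval_eq_descFactorial, Nat.descFactorial_self, ← Nat.cast_succ,
      ← Nat.cast_ascFactorial, Nat.ascFactorial_eq_factorial_mul_choose, coeff_shiftedLegendre]
    have hc : (((2 * m + 1) * (2 * m).choose m : ℕ) : ℝ) =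
        ((2 * m + 1).choose (m + 1) * (m + 1) : ℕ) :=
      congrArg _ (Nat.add_one_mul_choose_eq (2 * m) m)
    have hf : ((m + 1).factorial : ℝ) = (m + 1) * m.factorial := by
      push_cast [Nat.factorial_succ]; ring
    push_cast at hc ⊢
    rw [show m + m = 2 * m by ring, show m + (m + 1) = 2 * m + 1 by ring, hf]
    have : ((2 * m + 1).choose (m + 1) : ℝ) ≠ 0 :=
      Nat.cast_ne_zero.2 (Nat.choose_pos (by omega)).ne'
    have hsq : ((-1 : ℝ) ^ m) ^ 2 = 1 := by rw [← pow_mul, mul_comm, pow_mul]; norm_num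
    field_simp
    rw [Nat.choose_self, Nat.cast_one]
    linear_combination ((2 * m).choose m * (2 * m + 1) : ℝ) * hsq + hc
  · exact sum_eq_zero fun k hk => hlow k (by rw [mem_range] at hk; omega)

theorem integral_aeval_shiftedLegendre_mul (m n : ℕ) :
    ∫ x in (0 : ℝ)..1, aeval x (shiftedLegendre m) * aeval x (shiftedLegendre n) =
      if m = n then 1 / (2 * (n : ℝ) + 1) else 0 := by
  rcases le_total m n with h | h
  · exact integral_aeval_shiftedLegendre_mul_of_le h
  · simp_rw [mul_comm (aeval _ (shiftedLegendre m)) (aeval _ (shiftedLegendre n)),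
      integral_aeval_shiftedLegendre_mul_of_le h]
    rcases eq_or_ne m n with rfl | hne
    · rfl
    · rw [if_neg hne, if_neg hne.symm]

theorem integral_normalized_shiftedLegendre_mul (m n : ℕ) :
    ∫ x in (0 : ℝ)..1, √(2 * m + 1) * aeval x (shiftedLegendre m) *
      (√(2 * n + 1) * aeval x (shiftedLegendre n)) = if m = n then 1 else 0 := by
  simp_rw [mul_mul_mul_comm, integral_const_mul, integral_aeval_shiftedLegendre_mul]
  split_ifs with h
  · subst h
    rw [Real.mul_self_sqrt (by positivity)]
    field_simp
  · simp

end Polynomial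

theorem sum_range_mul_eq_ite_comm {R : Type*} [CommRing R] {N : ℕ} (A B : ℕ → ℕ → R)
    (h : ∀ i ≤ N, ∀ j ≤ N, ∑ k ∈ range (N + 1), A i k * B k j = if i = j then 1 else 0) :
    ∀ i ≤ N, ∀ j ≤ N, ∑ k ∈ range (N + 1), B i k * A k j = if i = j then 1 else 0 := by
  let toMatrix (C : ℕ → ℕ → R) : Matrix (Fin (N + 1)) (Fin (N + 1)) R := .of fun i j => C i j
  have entry (C D : ℕ → ℕ → R) (i j : Fin (N + 1)) :
      (toMatrix C * toMatrix D) i j = ∑ k ∈ range (N + 1), C i k * D k j :=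
    Fin.sum_univ_eq_sum_range (fun k => C i k * D k j) _
  have hAB : toMatrix A * toMatrix B = 1 := by
    ext i j
    rw [entry, h i (Nat.le_of_lt_succ i.2) j (Nat.le_of_lt_succ j.2), Matrix.one_apply]
    simp only [Fin.val_inj]
  intro i hi j hj
  have := congrFun₂ ((mul_eq_one_comm (M := Matrix (Fin (N + 1)) (Fin (N + 1)) R)).mp hAB)
    ⟨i, Nat.lt_succ_of_le hi⟩ ⟨j, Nat.lt_succ_of_le hj⟩
  simpa only [entry, Matrix.one_apply, Fin.mk.injEq] using this

theorem eq_sum_mul_integral_of_orthonormal {N : ℕ} {ℓ : ℕ → ℝ → ℝ} {L : ℕ → ℕ → ℝ}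
    (hℓ : ∀ ν ≤ N, ∀ x, ℓ ν x = ∑ k ∈ range (N + 1), L ν k * x ^ k)
    (horth : ∀ μ ≤ N, ∀ ν ≤ N, ∫ x in (0 : ℝ)..1, ℓ μ x * ℓ ν x = if μ = ν then 1 else 0)
    (b : ℕ → ℂ) {κ : ℕ} (hκ : κ ≤ N) :
    b κ = ∑ ν ∈ range (N + 1),
      (L ν κ : ℂ) * ∫ x in (0 : ℝ)..1, (∑ k ∈ range (N + 1), b k * (x : ℂ) ^ k) * ℓ ν x := by
  let M (ν k : ℕ) : ℝ := ∫ x in (0 : ℝ)..1, x ^ k * ℓ ν x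
  have hcont : ∀ ν ≤ N, Continuous (ℓ ν) := fun ν hν => by
    rw [funext (hℓ ν hν)]; fun_prop
  have hML : ∀ μ ≤ N, ∀ ν ≤ N,
      ∑ k ∈ range (N + 1), M μ k * L ν k = if μ = ν then 1 else 0 := by
    intro μ hμ ν hν
    have := hcont μ hμ
    simp_rw [← horth μ hμ ν hν, hℓ ν hν, mul_sum, M, ← integral_mul_const]
    rw [integral_finsetSum fun k _ => Continuous.intervalIntegrable (by fun_prop) _ _]
    exact sum_congr rfl fun k _ => integral_congr fun x _ => by ring
  have hLM := sum_range_mul_eq_ite_comm M (fun k ν => L ν k) hML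
  have hproj : ∀ ν ≤ N, ∫ x in (0 : ℝ)..1, (∑ k ∈ range (N + 1), b k * (x : ℂ) ^ k) * ℓ ν x =
      ∑ k ∈ range (N + 1), b k * M ν k := by
    intro ν hν
    have := hcont ν hν
    simp_rw [sum_mul, M]
    rw [integral_finsetSum fun k _ => Continuous.intervalIntegrable (by fun_prop) _ _]
    refine sum_congr rfl fun k _ => ?_
    simp_rw [mul_assoc, integral_const_mul, ← intervalIntegral.integral_ofReal]
    push_cast
    rfl
  calc b κ = ∑ k ∈ range (N + 1), b k * ((∑ ν ∈ range (N + 1), L ν κ * M ν k : ℝ) : ℂ) := by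
        rw [sum_eq_single_of_mem κ (mem_range.2 (Nat.lt_succ_of_le hκ))]
        · simp [hLM κ hκ κ hκ]
        · intro k hk hne
          rw [hLM κ hκ k (Nat.le_of_lt_succ (mem_range.1 hk)), if_neg hne.symm]
          simp
    _ = ∑ ν ∈ range (N + 1), (L ν κ : ℂ) * ∑ k ∈ range (N + 1), b k * M ν k := by
      simp_rw [mul_sum]
      rw [sum_comm]
      push_cast
      exact sum_congr rfl fun k _ => by rw [mul_sum]; exact sum_congr rfl fun ν _ => by ring
    _ = _ := sum_congr rfl fun ν hν => by rw [hproj ν (Nat.le_of_lt_succ (mem_range.1 hν))]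

theorem legendre_coeff_identity_general (N : ℕ) (a : ℕ → ℂ) (R : ℝ)
    (ℓ : ℕ → ℝ → ℝ)
    (hℓ : ∀ ν ξ, ℓ ν ξ = Real.sqrt (2 * ν + 1)
      * ∑ j ∈ Finset.range (ν + 1),
          ((-1 : ℝ) ^ j * (ν.choose j) * ((ν + j).choose j) * ξ ^ j))
    (T : ℂ → ℂ) (hT : ∀ X : ℂ, T X = ∑ κ ∈ Finset.range (N + 1), a κ * X ^ κ)
    (γ : ℕ → ℂ) (hγ : ∀ ν, γ ν = ∫ ξ in (0:ℝ)..1, T ((R : ℂ) * ξ) * (ℓ ν ξ : ℂ)) :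
    ∀ κ ∈ Finset.range (N + 1),
      a κ * (R : ℂ) ^ κ
        = (-1 : ℂ) ^ κ * ((2 * κ).choose κ : ℂ)
            * ∑ ν ∈ Finset.Icc κ N,
                ((Real.sqrt (2 * ν + 1) : ℂ) * ((ν + κ).choose (ν - κ) : ℂ) * γ ν) := by
  intro κ hκ
  have hℓP : ∀ ν ξ, ℓ ν ξ = √(2 * ν + 1) * aeval ξ (shiftedLegendre ν) := fun ν ξ => by
    rw [hℓ, aeval_shiftedLegendre le_rfl]
    refine congrArg _ (sum_congr rfl fun j _ => ?_)
    rw [coeff_shiftedLegendre, Nat.choose_symm_add]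
    push_cast
    rfl
  have hℓL : ∀ ν ≤ N, ∀ ξ, ℓ ν ξ =
      ∑ k ∈ range (N + 1), √(2 * ν + 1) * ((shiftedLegendre ν).coeff k : ℝ) * ξ ^ k :=
    fun ν hν ξ => by simp_rw [hℓP, aeval_shiftedLegendre hν, mul_sum, mul_assoc]
  have horth : ∀ μ ≤ N, ∀ ν ≤ N, ∫ x in (0 : ℝ)..1, ℓ μ x * ℓ ν x = if μ = ν then 1 else 0 :=
    fun μ _ ν _ => by simp_rw [hℓP, integral_normalized_shiftedLegendre_mul]
  have hγ' : ∀ ν, γ ν = ∫ x in (0 : ℝ)..1,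
      (∑ k ∈ range (N + 1), a k * R ^ k * (x : ℂ) ^ k) * ℓ ν x := fun ν => by
    simp_rw [hγ, hT, mul_pow, mul_assoc]
  rw [eq_sum_mul_integral_of_orthonormal hℓL horth (fun k => a k * R ^ k)
      (Nat.le_of_lt_succ (mem_range.1 hκ)),
    mul_sum, ← sum_subset fun ν hν => mem_range.2 (Nat.lt_succ_of_le (mem_Icc.1 hν).2)]
  · refine sum_congr rfl fun ν hν => ?_
    rw [coeff_shiftedLegendre_of_le (mem_Icc.1 hν).1, hγ']
    push_cast
    ring
  · intro ν _ hν
    rw [coeff_eq_zero_of_natDegree_lt (by simp_all)]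
    simp

theorem legendre_coeff_identity (N : ℕ) (a : ℕ → ℂ) (R : ℝ) (hR : 0 < R)
    (ℓ : ℕ → ℝ → ℝ)
    (hℓ : ∀ ν ξ, ℓ ν ξ = Real.sqrt (2 * ν + 1)
      * ∑ j ∈ Finset.range (ν + 1),
          ((-1 : ℝ) ^ j * (ν.choose j) * ((ν + j).choose j) * ξ ^ j))
    (T : ℂ → ℂ) (hT : ∀ X : ℂ, T X = ∑ κ ∈ Finset.range (N + 1), a κ * X ^ κ)
    (γ : ℕ → ℂ) (hγ : ∀ ν, γ ν = ∫ ξ in (0:ℝ)..1, T ((R : ℂ) * ξ) * (ℓ ν ξ : ℂ)) :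
    ∀ κ ∈ Finset.range (N + 1),
      a κ * (R : ℂ) ^ κ
        = (-1 : ℂ) ^ κ * ((2 * κ).choose κ : ℂ)
            * ∑ ν ∈ Finset.Icc κ N,
                ((Real.sqrt (2 * ν + 1) : ℂ) * ((ν + κ).choose (ν - κ) : ℂ) * γ ν) :=
  legendre_coeff_identity_general N a R ℓ hℓ T hT γ hγ
end
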